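/- arXiv:1405.0023 — 6 statements merged into one kernel-verified Lean document; each statement's English description precedes it below -/
import Mathlib

section
/- Let n be a positive integer and let S be the set of real symmetric positive semidefinite n×n matrices whose largest eigenvalue (spectral norm) is at most 1. Then the trace is the convex hull (greatest convex minorant) of the rank on S; precisely: (i) the map Y ↦ trace(Y) is convex on S and trace(Y) ≤ rank(Y) for every Y ∈ S; (ii) for every function g : Matrix (Fin n) (Fin n) ℝ → ℝ that is convex on S and satisfies g(Y) ≤ rank(Y) for all Y ∈ S, one has g(Y) ≤ trace(Y) for all Y ∈ S. -/
/-!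
Write `Y = U diag(p) Uᴴ` with eigenvalues `p i ∈ [0, 1]`. Then `p` is the mean of the indicator
vector of a random set `T` containing each `i` independently with probability `p i`, so
`Y = ∑ T, ℙ(T) • P_T` with the orthogonal projections `P_T = U diag(𝟙_T) Uᴴ`. Rank equals trace
on projections, so Jensen's inequality gives `g Y ≤ ∑ T, ℙ(T) • g P_T ≤ ∑ T, ℙ(T) • trace P_T =
trace Y`. Conversely, the trace is linear and `trace Y = ∑ i, p i ≤ #{i | p i ≠ 0} = rank Y`.
-/

open Matrix Finset Unitary
open scoped MatrixOrder ComplexOrder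

section BernoulliWeight

variable {ι R : Type*} [Fintype ι] [DecidableEq ι] [CommRing R]

/-- The probability that the random subset of `ι` containing each `i` independently with
probability `p i` is `T`. -/
def bernoulliWeight (p : ι → R) (T : Finset ι) : R :=
  (∏ i ∈ T, p i) * ∏ i ∈ Tᶜ, (1 - p i)

lemma bernoulliWeight_nonneg [PartialOrder R] [IsOrderedRing R] {p : ι → R}
    (hp : p ∈ Set.Icc 0 1) (T : Finset ι) : 0 ≤ bernoulliWeight p T :=
  mul_nonneg (prod_nonneg fun i _ ↦ hp.1 i) (prod_nonneg fun i _ ↦ sub_nonneg.2 (hp.2 i))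

lemma sum_bernoulliWeight (p : ι → R) : ∑ T, bernoulliWeight p T = 1 := by
  simp [bernoulliWeight, compl_eq_univ_sdiff, ← powerset_univ, ← prod_add]

lemma sum_bernoulliWeight_smul_indicator (p : ι → R) :
    ∑ T, bernoulliWeight p T • (fun i ↦ if i ∈ T then (1 : R) else 0) = p := by
  ext j
  -- expand `∏ i, (p i + q i)`, where `q` agrees with `1 - p` except that `q j = 0`
  set q : ι → R := fun i ↦ if i = j then 0 else 1 - p i
  have hterm (T : Finset ι) :
      bernoulliWeight p T * (if j ∈ T then 1 else 0) = (∏ i ∈ T, p i) * ∏ i ∈ Tᶜ, q i := by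
    by_cases hj : j ∈ T
    · simp only [bernoulliWeight, hj, if_true, mul_one]
      congr 1
      exact prod_congr rfl fun i hi ↦ (if_neg (ne_of_mem_of_not_mem hj (mem_compl.1 hi)).symm).symm
    · rw [Finset.prod_eq_zero (mem_compl.2 hj) (if_pos rfl : q j = 0)]
      simp [hj]
  calc (∑ T, bernoulliWeight p T • fun i ↦ if i ∈ T then (1 : R) else 0) j
      = ∑ T ∈ univ.powerset, (∏ i ∈ T, p i) * ∏ i ∈ univ \ T, q i := by
        simp only [Finset.sum_apply, Pi.smul_apply, smul_eq_mul, hterm, powerset_univ,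
          compl_eq_univ_sdiff]
    _ = ∏ i, (p i + q i) := (prod_add p q univ).symm
    _ = p j := by
        rw [prod_eq_single j (fun i _ hij ↦ by simp [q, hij]) (by simp)]
        simp [q]

end BernoulliWeight

namespace Matrix

variable {ι 𝕜 : Type*} [DecidableEq ι] [RCLike 𝕜]

lemma diagonal_le_diagonal_iff {d e : ι → 𝕜} : diagonal d ≤ diagonal e ↔ d ≤ e := by
  rw [le_iff, diagonal_sub, posSemidef_diagonal_iff]
  simp [Pi.le_def]

lemma diagonal_mem_Icc_iff {d : ι → 𝕜} : diagonal d ∈ Set.Icc 0 1 ↔ d ∈ Set.Icc 0 1 := by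
  rw [Set.mem_Icc, Set.mem_Icc, ← diagonal_zero, ← diagonal_one, diagonal_le_diagonal_iff,
    diagonal_le_diagonal_iff]
  exact Iff.rfl

variable [Fintype ι]

lemma conjStarAlgAut_mem_Icc_iff (U : unitary (Matrix ι ι 𝕜)) {A : Matrix ι ι 𝕜} :
    conjStarAlgAut 𝕜 _ U A ∈ Set.Icc 0 1 ↔ A ∈ Set.Icc 0 1 := by
  rw [Set.mem_Icc, Set.mem_Icc, ← map_zero (conjStarAlgAut 𝕜 _ U),
    ← map_one (conjStarAlgAut 𝕜 _ U), map_le_map_iff, map_le_map_iff, map_zero, map_one]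

lemma IsHermitian.le_one_iff_eigenvalues_le_one {A : Matrix ι ι 𝕜} (hA : A.IsHermitian) :
    A ≤ 1 ↔ ∀ i, hA.eigenvalues i ≤ 1 := by
  conv_lhs => rw [hA.spectral_theorem, ← map_one (conjStarAlgAut 𝕜 _ hA.eigenvectorUnitary),
    map_le_map_iff, ← diagonal_one, diagonal_le_diagonal_iff]
  simp only [Pi.le_def, Function.comp_apply]
  norm_cast

lemma setOf_posSemidef_eigenvalues_le_one :
    {A : Matrix ι ι 𝕜 | ∃ h : A.PosSemidef, ∀ i, h.1.eigenvalues i ≤ 1} = Set.Icc 0 1 := by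
  ext A
  simp only [Set.mem_ofPred_eq, Set.mem_Icc, nonneg_iff_posSemidef]
  exact ⟨fun ⟨h, hle⟩ ↦ ⟨h, h.1.le_one_iff_eigenvalues_le_one.2 hle⟩,
    fun ⟨h, hle⟩ ↦ ⟨h, h.1.le_one_iff_eigenvalues_le_one.1 hle⟩⟩

lemma trace_eq_rank_of_isIdempotentElem {K : Type*} [Field K] {P : Matrix ι ι K}
    (hP : IsIdempotentElem P) : P.trace = P.rank := by
  have hlin : IsIdempotentElem (toLin' P) := hP.map (toLinAlgEquiv' (R := K))
  rw [← trace_toLin'_eq, (LinearMap.IsIdempotentElem.isProj_range _ hlin).trace]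
  rfl

lemma trace_le_rank_of_mem_Icc {A : Matrix ι ι ℝ} (hA : A ∈ Set.Icc 0 1) :
    A.trace ≤ A.rank := by
  have hH : A.IsHermitian := (nonneg_iff_posSemidef.1 hA.1).isHermitian
  have hle := hH.le_one_iff_eigenvalues_le_one.1 hA.2
  rw [hH.trace_eq_sum_eigenvalues, hH.rank_eq_card_non_zero_eigs, Fintype.card_subtype,
    ← sum_filter_ne_zero]
  simpa using sum_le_card_nsmul _ _ 1 fun i _ ↦ hle i

lemma IsHermitian.eq_sum_bernoulliWeight_smul {A : Matrix ι ι ℝ} (hA : A.IsHermitian) :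
    A = ∑ T, bernoulliWeight hA.eigenvalues T •
      conjStarAlgAut ℝ _ hA.eigenvectorUnitary (diagonal fun i ↦ if i ∈ T then 1 else 0) := by
  set U := conjStarAlgAut ℝ _ hA.eigenvectorUnitary
  calc A = U (diagonal hA.eigenvalues) := by
        simpa [RCLike.ofReal_real_eq_id, -conjStarAlgAut_apply] using hA.spectral_theorem
    _ = U (diagonal (∑ T, bernoulliWeight hA.eigenvalues T • fun i ↦ if i ∈ T then 1 else 0)) := by
        rw [sum_bernoulliWeight_smul_indicator]
    _ = _ := by
        change U (diagonalLinearMap ι ℝ ℝ _) = _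
        simp only [map_sum, map_smul]
        rfl

theorem le_trace_of_convexOn_of_le_rank {g : Matrix ι ι ℝ → ℝ}
    (hg : ConvexOn ℝ (Set.Icc 0 1) g) (hg_rank : ∀ A ∈ Set.Icc 0 1, g A ≤ A.rank)
    {A : Matrix ι ι ℝ} (hA : A ∈ Set.Icc 0 1) : g A ≤ A.trace := by
  have hH : A.IsHermitian := (nonneg_iff_posSemidef.1 hA.1).isHermitian
  set p := hH.eigenvalues
  have hp : p ∈ Set.Icc 0 1 :=
    ⟨(nonneg_iff_posSemidef.1 hA.1).eigenvalues_nonneg, hH.le_one_iff_eigenvalues_le_one.1 hA.2⟩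
  have hw := bernoulliWeight_nonneg hp
  set P : Finset ι → Matrix ι ι ℝ := fun T ↦
    conjStarAlgAut ℝ _ hH.eigenvectorUnitary (diagonal fun i ↦ if i ∈ T then 1 else 0)
  have hP (T : Finset ι) : P T ∈ Set.Icc 0 1 := by
    refine (conjStarAlgAut_mem_Icc_iff _).2 (diagonal_mem_Icc_iff.2 ⟨fun i ↦ ?_, fun i ↦ ?_⟩) <;>
      dsimp only [Pi.zero_apply, Pi.one_apply] <;> split_ifs <;> norm_num
  have hP_idem (T : Finset ι) : IsIdempotentElem (P T) := by
    refine IsIdempotentElem.map ?_ _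
    rw [IsIdempotentElem, diagonal_mul_diagonal]
    congr 1; ext i; split_ifs <;> norm_num
  calc g A = g (∑ T, bernoulliWeight p T • P T) := by rw [← hH.eq_sum_bernoulliWeight_smul]
    _ ≤ ∑ T, bernoulliWeight p T • g (P T) :=
      hg.map_sum_le (fun T _ ↦ hw T) (sum_bernoulliWeight p) fun T _ ↦ hP T
    _ ≤ ∑ T, bernoulliWeight p T • (P T).trace := by
      gcongr with T
      · exact hw T
      · exact (hg_rank _ (hP T)).trans_eq (trace_eq_rank_of_isIdempotentElem (hP_idem T)).symm
    _ = (∑ T, bernoulliWeight p T • P T).trace := by simp only [trace_sum, trace_smul]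
    _ = A.trace := by rw [← hH.eq_sum_bernoulliWeight_smul]

end Matrix

theorem trace_is_convex_hull_of_rank_on_psd_ball_general
    (n : ℕ)
    (S : Set (Matrix (Fin n) (Fin n) ℝ))
    (hS : S = {Y : Matrix (Fin n) (Fin n) ℝ |
      ∃ h : Y.PosSemidef, ∀ i, h.1.eigenvalues i ≤ 1}) :
    (ConvexOn ℝ S (fun Y => Y.trace) ∧ ∀ Y ∈ S, Y.trace ≤ (Y.rank : ℝ)) ∧
    (∀ g : Matrix (Fin n) (Fin n) ℝ → ℝ,
      ConvexOn ℝ S g → (∀ Y ∈ S, g Y ≤ (Y.rank : ℝ)) →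
      ∀ Y ∈ S, g Y ≤ Y.trace) := by
  rw [setOf_posSemidef_eigenvalues_le_one] at hS
  subst hS
  exact ⟨⟨(traceLinearMap _ ℝ ℝ).convexOn (convex_Icc 0 1), fun Y ↦ trace_le_rank_of_mem_Icc⟩,
    fun g hg hg_rank Y ↦ le_trace_of_convexOn_of_le_rank hg hg_rank⟩

/-- On the set `S` of real symmetric positive semidefinite `n × n`
matrices with all eigenvalues at most `1`, the trace is the convex hull (greatest
convex minorant) of the rank. -/
theorem trace_is_convex_hull_of_rank_on_psd_ball
    (n : ℕ) (hn : 0 < n)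
    (S : Set (Matrix (Fin n) (Fin n) ℝ))
    (hS : S = {Y : Matrix (Fin n) (Fin n) ℝ |
      ∃ h : Y.PosSemidef, ∀ i, h.1.eigenvalues i ≤ 1}) :
    (ConvexOn ℝ S (fun Y => Y.trace) ∧ ∀ Y ∈ S, Y.trace ≤ (Y.rank : ℝ)) ∧
    (∀ g : Matrix (Fin n) (Fin n) ℝ → ℝ,
      ConvexOn ℝ S g → (∀ Y ∈ S, g Y ≤ (Y.rank : ℝ)) →
      ∀ Y ∈ S, g Y ≤ Y.trace) :=
  trace_is_convex_hull_of_rank_on_psd_ball_general n S hS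
end

section
/- Let Ψ_x ∈ Q(n,m) be positive semidefinite on the unit circle. Let K be the set of all Ψ ∈ Q(n,m) such that, for every θ ∈ ℝ, Ψ(θ) is positive semidefinite, Ψ_x(θ) − Ψ(θ) is positive semidefinite, and Ψ_x(θ) − Ψ(θ) is a diagonal matrix. Then there exists Ψ̂ ∈ K such that T(Ψ̂) ≤ T(Ψ) for every Ψ ∈ K; that is, the minimum of T over K is attained. -/
open Matrix Complex Real
open scoped ComplexOrder

/-- The matrix pseudo-polynomial `θ ↦ Q₀ + ∑_{k=1}^m (e^{-ikθ} • Q_k + e^{ikθ} • Q_kᵀ)`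
with real coefficient matrices `Q 0, …, Q m`. -/
noncomputable def psiOf (n m : ℕ) (Q : Fin (m + 1) → Matrix (Fin n) (Fin n) ℝ) :
    ℝ → Matrix (Fin n) (Fin n) ℂ := fun θ =>
  (Q 0).map (Complex.ofReal) +
    ∑ k : Fin m,
      (Complex.exp (-(Complex.I * ((k.1 : ℂ) + 1) * (θ : ℂ))) •
          (Q k.succ).map Complex.ofReal +
        Complex.exp (Complex.I * ((k.1 : ℂ) + 1) * (θ : ℂ)) •
          ((Q k.succ)ᵀ).map Complex.ofReal)

/-- Membership in the class `Q(n,m)` of matrix pseudo-polynomials with real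
coefficients and symmetric constant coefficient. -/
def memQ (n m : ℕ) (Ψ : ℝ → Matrix (Fin n) (Fin n) ℂ) : Prop :=
  ∃ Q : Fin (m + 1) → Matrix (Fin n) (Fin n) ℝ,
    (Q 0).IsSymm ∧ ∀ θ : ℝ, Ψ θ = psiOf n m Q θ

/-- The normalized trace integral `T(Ψ) = (1/2π) ∫_{-π}^{π} Re tr Ψ(θ) dθ`. -/
noncomputable def traceInt (n : ℕ) (Ψ : ℝ → Matrix (Fin n) (Fin n) ℂ) : ℝ :=
  (1 / (2 * Real.pi)) * ∫ θ in (-Real.pi)..Real.pi, (Matrix.trace (Ψ θ)).re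

/-!
The map `Q ↦ psiOf n m Q` identifies `K` with a set of coefficient tuples, on which
`T(psiOf n m Q) = tr Q₀` because every nonconstant Fourier mode integrates to zero over a
period. This coefficient set is closed, since each constraint is a closed condition on `Q` for
fixed `θ`. It is also bounded: the constraints force `0 ≤ Ψ(θ)ᵢᵢ ≤ Ψx(θ)ᵢᵢ` and
`Ψ(θ)ᵢⱼ = Ψx(θ)ᵢⱼ` for `i ≠ j`, so the entries of `Ψ` are bounded uniformly in `θ`, and hence
so are its coefficients, which are Fourier coefficients of those entries. It contains the
coefficients of `Ψx`, so the continuous function `Q ↦ tr Q₀` attains its minimum on it.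
-/

lemma norm_apply_le_of_posSemidef_of_isDiag_sub {ι : Type*} {A B : Matrix ι ι ℂ}
    (hA : A.PosSemidef) (hBA : (B - A).PosSemidef) (hdiag : (B - A).IsDiag) (i j : ι) :
    ‖A i j‖ ≤ ‖B i j‖ := by
  obtain rfl | hij := eq_or_ne i j
  · refine CStarAlgebra.norm_le_norm_of_nonneg_of_le hA.diag_nonneg (sub_nonneg.mp ?_)
    simpa using hBA.diag_nonneg (i := i)
  · rw [sub_eq_zero.mp (hdiag hij)]

lemma isClosed_setOf_posSemidef {X ι 𝕜 : Type*} [TopologicalSpace X] [Fintype ι] [RCLike 𝕜]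
    {f : X → Matrix ι ι 𝕜} (hf : Continuous f) : IsClosed {x | (f x).PosSemidef} := by
  simp only [posSemidef_iff_dotProduct_mulVec, IsHermitian, Set.ofPred_and, Set.ofPred_forall]
  exact (isClosed_eq hf.matrix_conjTranspose hf).inter <| isClosed_iInter fun v =>
    isClosed_le continuous_const (continuous_const.dotProduct (hf.matrix_mulVec continuous_const))

lemma isClosed_setOf_isDiag {X ι R : Type*} [TopologicalSpace X] [TopologicalSpace R] [Zero R]
    [T2Space R] {f : X → Matrix ι ι R} (hf : Continuous f) : IsClosed {x | (f x).IsDiag} := by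
  simp only [IsDiag, Pairwise, Set.ofPred_forall]
  exact isClosed_iInter fun i => isClosed_iInter fun j =>
    isClosed_iInter fun _ => isClosed_eq (hf.matrix_elem i j) continuous_const

/-- The coefficient matrices of the members of `K`. -/
def feasibleCoeffs (n m : ℕ) (Ψx : ℝ → Matrix (Fin n) (Fin n) ℂ) :
    Set (Fin (m + 1) → Matrix (Fin n) (Fin n) ℝ) :=
  {Q | (Q 0).IsSymm ∧ ∀ θ, (psiOf n m Q θ).PosSemidef ∧
    (Ψx θ - psiOf n m Q θ).PosSemidef ∧ (Ψx θ - psiOf n m Q θ).IsDiag}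

variable {n m : ℕ}

lemma integral_exp_int_mul_I (d : ℤ) :
    ∫ θ in (-π)..π, exp (I * d * θ) = if d = 0 then ((2 * π : ℝ) : ℂ) else 0 := by
  split_ifs with hd
  · simp [hd, two_mul]
  · have hc : I * d ≠ 0 := by simp [hd]
    rw [integral_exp_mul_complex hc, div_eq_zero_iff, sub_eq_zero]
    left
    rw [show I * d * ((-π : ℝ) : ℂ) = I * d * π - d * (2 * π * I) by push_cast; ring,
      Complex.exp_sub, exp_int_mul_two_pi_mul_I, div_one]

lemma integral_exp_int_mul_I_mul (d : ℤ) (c : ℂ) :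
    ∫ θ in (-π)..π, exp (I * d * θ) * c = if d = 0 then ((2 * π : ℝ) : ℂ) * c else 0 := by
  rw [intervalIntegral.integral_mul_const, integral_exp_int_mul_I]
  split_ifs <;> simp

lemma psiOf_apply (Q : Fin (m + 1) → Matrix (Fin n) (Fin n) ℝ) (θ : ℝ) (i j : Fin n) :
    psiOf n m Q θ i j = (Q 0 i j : ℂ) +
      ∑ k : Fin m, (exp (-(I * ((k : ℂ) + 1) * θ)) * Q k.succ i j
        + exp (I * ((k : ℂ) + 1) * θ) * Q k.succ j i) := by
  simp [psiOf, Matrix.sum_apply]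

lemma exp_mul_psiOf_apply (Q : Fin (m + 1) → Matrix (Fin n) (Fin n) ℝ) (l : ℕ) (θ : ℝ)
    (i j : Fin n) :
    exp (I * l * θ) * psiOf n m Q θ i j = exp (I * (l : ℤ) * θ) * Q 0 i j +
      ∑ k : Fin m, (exp (I * ((l - (k + 1) : ℤ) : ℂ) * θ) * Q k.succ i j +
        exp (I * ((l + (k + 1) : ℤ) : ℂ) * θ) * Q k.succ j i) := by
  rw [psiOf_apply, mul_add, Finset.mul_sum]
  refine congrArg₂ (· + ·) (by norm_cast) (Finset.sum_congr rfl fun k _ => ?_)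
  rw [mul_add, ← mul_assoc, ← mul_assoc, ← Complex.exp_add, ← Complex.exp_add]
  congr 3 <;> (push_cast; ring)

lemma integral_exp_mul_psiOf_apply (Q : Fin (m + 1) → Matrix (Fin n) (Fin n) ℝ)
    (l : Fin (m + 1)) (i j : Fin n) :
    ∫ θ in (-π)..π, exp (I * (l : ℕ) * θ) * psiOf n m Q θ i j = ((2 * π : ℝ) : ℂ) * Q l i j := by
  have hint : ∀ (d : ℤ) (c : ℂ),
      IntervalIntegrable (fun θ : ℝ => exp (I * d * θ) * c) MeasureTheory.volume (-π) π :=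
    fun d c => (by fun_prop : Continuous _).intervalIntegrable _ _
  simp_rw [exp_mul_psiOf_apply]
  rw [intervalIntegral.integral_add (hint _ _)
      (by apply Continuous.intervalIntegrable; fun_prop),
    intervalIntegral.integral_finsetSum fun k _ => (hint _ _).add (hint _ _)]
  simp_rw [intervalIntegral.integral_add (hint _ _) (hint _ _), integral_exp_int_mul_I_mul]
  have hne : ∀ k : Fin m, ((l : ℕ) + (k + 1) : ℤ) ≠ 0 := fun k => by omega
  simp only [hne, if_false, add_zero]
  induction l using Fin.cases with
  | zero =>
    rw [if_pos (by simp),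
      Finset.sum_eq_zero fun k _ => if_neg (by simp only [Fin.val_zero]; omega), add_zero]
  | succ k₀ =>
    rw [if_neg (by rw [Fin.val_succ]; omega), zero_add,
      Finset.sum_eq_single k₀
        (fun k _ hk => if_neg (by rw [Fin.val_succ]; intro h; exact hk (Fin.ext (by omega))))
        (fun h => absurd (Finset.mem_univ k₀) h),
      if_pos (by rw [Fin.val_succ]; omega)]

lemma continuous_psiOf (Q : Fin (m + 1) → Matrix (Fin n) (Fin n) ℝ) : Continuous (psiOf n m Q) := by
  unfold psiOf; fun_prop

lemma traceInt_psiOf (Q : Fin (m + 1) → Matrix (Fin n) (Fin n) ℝ) :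
    traceInt n (psiOf n m Q) = (Q 0).trace := by
  have hentry (i : Fin n) : ∫ θ in (-π)..π, psiOf n m Q θ i i = ((2 * π : ℝ) : ℂ) * Q 0 i i := by
    simpa using integral_exp_mul_psiOf_apply Q 0 i i
  have htrace : ∫ θ in (-π)..π, (psiOf n m Q θ).trace = ((2 * π * (Q 0).trace : ℝ) : ℂ) := by
    simp only [Matrix.trace, Matrix.diag]
    rw [intervalIntegral.integral_finsetSum fun i _ =>
      ((continuous_psiOf Q).matrix_elem i i).intervalIntegrable _ _]
    simp [hentry, Finset.mul_sum]
  unfold traceInt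
  rw [show (fun θ => (psiOf n m Q θ).trace.re) = fun θ => reCLM (psiOf n m Q θ).trace from rfl,
    reCLM.intervalIntegral_comp_comm
      ((continuous_psiOf Q).matrix_trace.intervalIntegrable _ _), htrace, reCLM_apply, ofReal_re]
  field_simp

lemma isClosed_feasibleCoeffs (Ψx : ℝ → Matrix (Fin n) (Fin n) ℂ) :
    IsClosed (feasibleCoeffs n m Ψx) := by
  have hcont (θ : ℝ) :
      Continuous fun Q : Fin (m + 1) → Matrix (Fin n) (Fin n) ℝ => psiOf n m Q θ := by
    unfold psiOf; fun_prop
  have hsub (θ : ℝ) := (continuous_const (y := Ψx θ)).sub (hcont θ)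
  simp only [feasibleCoeffs, Set.ofPred_and, Set.ofPred_forall]
  exact (isClosed_eq (continuous_apply 0).matrix_transpose (continuous_apply 0)).inter <|
    isClosed_iInter fun θ => (isClosed_setOf_posSemidef (hcont θ)).inter <|
      (isClosed_setOf_posSemidef (hsub θ)).inter (isClosed_setOf_isDiag (hsub θ))

section EntrywiseNorm

attribute [local instance] Matrix.normedAddCommGroup Matrix.normedSpace

lemma norm_psiOf_apply_le (P : Fin (m + 1) → Matrix (Fin n) (Fin n) ℝ) (θ : ℝ) (i j : Fin n) :
    ‖psiOf n m P θ i j‖ ≤ (2 * m + 1) * ‖P‖ := by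
  have hentry (l : Fin (m + 1)) (i j : Fin n) : ‖(P l i j : ℂ)‖ ≤ ‖P‖ := by
    rw [norm_real]
    exact (norm_entry_le_entrywise_sup_norm (P l)).trans (norm_le_pi_norm P l)
  have hexp (z : ℂ) (hz : z.re = 0) : ‖exp z‖ = 1 := by rw [norm_exp, hz, Real.exp_zero]
  rw [psiOf_apply]
  calc _ ≤ ‖(P 0 i j : ℂ)‖ + ∑ k : Fin m, (‖(P k.succ i j : ℂ)‖ + ‖(P k.succ j i : ℂ)‖) := by
        refine (norm_add_le _ _).trans (add_le_add_right ((norm_sum_le _ _).trans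
          (Finset.sum_le_sum fun k _ => (norm_add_le _ _).trans_eq ?_)) _)
        rw [norm_mul, norm_mul, hexp _ (by simp), hexp _ (by simp), one_mul, one_mul]
    _ ≤ ‖P‖ + ∑ k : Fin m, (‖P‖ + ‖P‖) := by gcongr <;> apply hentry
    _ = (2 * m + 1) * ‖P‖ := by
      rw [Finset.sum_const, Finset.card_univ, Fintype.card_fin, nsmul_eq_mul]; ring

lemma norm_le_of_forall_norm_psiOf_apply_le {Q : Fin (m + 1) → Matrix (Fin n) (Fin n) ℝ} {C : ℝ}
    (hC : 0 ≤ C) (h : ∀ θ i j, ‖psiOf n m Q θ i j‖ ≤ C) : ‖Q‖ ≤ C := by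
  refine (pi_norm_le_iff_of_nonneg hC).2 fun l => (Matrix.norm_le_iff hC).2 fun i j => ?_
  have hint : ‖((2 * π : ℝ) : ℂ) * Q l i j‖ ≤ C * |π - -π| := by
    rw [← integral_exp_mul_psiOf_apply]
    refine intervalIntegral.norm_integral_le_of_norm_le_const fun θ _ => ?_
    rw [norm_mul, norm_exp]
    simpa using h θ i j
  rw [norm_mul, norm_real, norm_real, Real.norm_of_nonneg (by positivity),
    abs_of_pos (by linarith [pi_pos])] at hint
  nlinarith [pi_pos]

lemma feasibleCoeffs_subset_closedBall {Ψx : ℝ → Matrix (Fin n) (Fin n) ℂ}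
    {P : Fin (m + 1) → Matrix (Fin n) (Fin n) ℝ} (hP : ∀ θ, Ψx θ = psiOf n m P θ) :
    feasibleCoeffs n m Ψx ⊆ Metric.closedBall 0 ((2 * m + 1) * ‖P‖) := fun Q hQ => by
  rw [mem_closedBall_zero_iff]
  refine norm_le_of_forall_norm_psiOf_apply_le (by positivity) fun θ i j => ?_
  obtain ⟨hpsd, hsub, hdiag⟩ := hQ.2 θ
  exact (norm_apply_le_of_posSemidef_of_isDiag_sub hpsd hsub hdiag i j).trans
    (hP θ ▸ norm_psiOf_apply_le P θ i j)

lemma isCompact_feasibleCoeffs {Ψx : ℝ → Matrix (Fin n) (Fin n) ℂ}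
    {P : Fin (m + 1) → Matrix (Fin n) (Fin n) ℝ} (hP : ∀ θ, Ψx θ = psiOf n m P θ) :
    IsCompact (feasibleCoeffs n m Ψx) :=
  (isCompact_closedBall _ _).of_isClosed_subset (isClosed_feasibleCoeffs Ψx)
    (feasibleCoeffs_subset_closedBall hP)

end EntrywiseNorm

theorem exists_minimizer_trace_integral_general
    (n m : ℕ)
    (Ψx : ℝ → Matrix (Fin n) (Fin n) ℂ)
    (hΨx : memQ n m Ψx) (hpsd : ∀ θ : ℝ, (Ψx θ).PosSemidef)
    (K : Set (ℝ → Matrix (Fin n) (Fin n) ℂ))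
    (hK : K = {Ψ : ℝ → Matrix (Fin n) (Fin n) ℂ | memQ n m Ψ ∧
        ∀ θ : ℝ, (Ψ θ).PosSemidef ∧ (Ψx θ - Ψ θ).PosSemidef ∧ (Ψx θ - Ψ θ).IsDiag}) :
    ∃ Ψopt ∈ K, ∀ Ψ ∈ K, traceInt n Ψopt ≤ traceInt n Ψ := by
  obtain ⟨P, hPsymm, hP⟩ := hΨx
  have hPfeas : P ∈ feasibleCoeffs n m Ψx :=
    ⟨hPsymm, fun θ => by rw [← hP θ, sub_self]; exact ⟨hpsd θ, .zero, isDiag_zero⟩⟩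
  obtain ⟨Qopt, hQopt, hmin⟩ := (isCompact_feasibleCoeffs hP).exists_isMinOn ⟨P, hPfeas⟩
    (continuous_apply 0).matrix_trace.continuousOn
  subst hK
  refine ⟨psiOf n m Qopt, ⟨⟨Qopt, hQopt.1, fun _ => rfl⟩, hQopt.2⟩, ?_⟩
  rintro Ψ ⟨⟨Q, hQsymm, hQ⟩, hΨ⟩
  obtain rfl : Ψ = psiOf n m Q := funext hQ
  rw [traceInt_psiOf, traceInt_psiOf]
  exact hmin ⟨hQsymm, hΨ⟩

/-- (Proposition on existence.) If `Ψ_x ∈ Q(n,m)` is positive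
semidefinite on the unit circle, the minimum of the trace integral `T` over the
feasible set `K` of the relaxed problem is attained. -/
theorem exists_minimizer_trace_integral
    (n m : ℕ) (hn : 0 < n) (hm : 0 < m)
    (Ψx : ℝ → Matrix (Fin n) (Fin n) ℂ)
    (hΨx : memQ n m Ψx) (hpsd : ∀ θ : ℝ, (Ψx θ).PosSemidef)
    (K : Set (ℝ → Matrix (Fin n) (Fin n) ℂ))
    (hK : K = {Ψ : ℝ → Matrix (Fin n) (Fin n) ℂ | memQ n m Ψ ∧
        ∀ θ : ℝ, (Ψ θ).PosSemidef ∧ (Ψx θ - Ψ θ).PosSemidef ∧ (Ψx θ - Ψ θ).IsDiag}) :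
    ∃ Ψopt ∈ K, ∀ Ψ ∈ K, traceInt n Ψopt ≤ traceInt n Ψ :=
  exists_minimizer_trace_integral_general n m Ψx hΨx hpsd K hK
end

section
/- Let Y be a real symmetric n(m+1) × n(m+1) matrix partitioned into n×n blocks Y_{jk}, 0 ≤ j,k ≤ m. Then for every θ ∈ ℝ: Δ(θ) Y Δ(θ)ᴴ = D_0(Y) + ∑_{k=1}^{m} (Complex.exp(-i k θ) • D_k(Y) + Complex.exp(i k θ) • D_k(Y)ᵀ) (all real matrices coerced to ℂ). In particular θ ↦ Δ(θ) Y Δ(θ)ᴴ belongs to Q(n,m). -/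
open Matrix Complex Real
open scoped ComplexOrder

/-- The block-row shift matrix `Δ(θ) = [I_n, e^{iθ}I_n, …, e^{imθ}I_n]`, with the block
index `j ∈ Fin (m+1)` recorded as the first component of the column index. -/
noncomputable def Delta (n m : ℕ) (θ : ℝ) : Matrix (Fin n) (Fin (m + 1) × Fin n) ℂ :=
  Matrix.of fun a p =>
    Complex.exp (Complex.I * (p.1.1 : ℂ) * (θ : ℂ)) * (if a = p.2 then 1 else 0)

/-- The block-diagonal-sum operators: `D_k(Y) = ∑_{j=0}^{m-k} Y_{j, j+k}`, where `Y_{jk}`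
denotes the `(j,k)` block of size `n × n` of `Y`. -/
def Dop (n m : ℕ) (Y : Matrix (Fin (m + 1) × Fin n) (Fin (m + 1) × Fin n) ℝ)
    (k : Fin (m + 1)) : Matrix (Fin n) (Fin n) ℝ :=
  ∑ j : Fin (m + 1),
    if h : j.1 + k.1 ≤ m
      then Matrix.of fun a b => Y (j, a) (⟨j.1 + k.1, Nat.lt_succ_of_le h⟩, b)
      else 0

/-!
Entrywise, `(Δ(θ) X Δ(θ)ᴴ)_{ab} = ∑_{j,j'} e^{i(j-j')θ} X_{(j,a),(j',b)}`. Sorting the pairs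
`(j, j')` by `k = |j - j'|`, the pairs with `j' = j + k` collect into `e^{-ikθ} D_k(Y)`, and the pairs
with `j = j' + k` into `e^{ikθ}` times the transpose of `D_k(Y)`, because `Y` is symmetric.
-/

theorem Fin.sum_ite_val_eq {R : Type*} [AddCommMonoid R] {M t : ℕ} (f : Fin (M + 1) → R) :
    ∑ j : Fin (M + 1), (if (j : ℕ) = t then f j else 0)
      = if h : t ≤ M then f ⟨t, Nat.lt_succ_of_le h⟩ else 0 := by
  split_ifs with h
  · simp_rw [← Fin.ext_iff (b := ⟨t, Nat.lt_succ_of_le h⟩)]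
    simp
  · exact Finset.sum_eq_zero fun j _ => if_neg (by omega)

lemma cexp_I_mul_sub_eq_sum_ite {m j j' : ℕ} (hj : j ≤ m) (hj' : j' ≤ m) (θ : ℝ) :
    cexp (I * ((j : ℂ) - j') * θ)
      = (if j = j' then 1 else 0) +
          ∑ k : Fin m,
            ((if j' = j + (k + 1) then cexp (-(I * ((k : ℂ) + 1) * θ)) else 0) +
              (if j = j' + (k + 1) then cexp (I * ((k : ℂ) + 1) * θ) else 0)) := by
  rw [Fin.sum_univ_eq_sum_range (fun k : ℕ =>
    (if j' = j + (k + 1) then cexp (-(I * ((k : ℂ) + 1) * θ)) else 0) +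
      (if j = j' + (k + 1) then cexp (I * ((k : ℂ) + 1) * θ) else 0)), Finset.sum_add_distrib]
  rcases lt_trichotomy j j' with h | rfl | h
  · obtain ⟨d, rfl⟩ := Nat.exists_eq_add_of_lt h
    have hd : d < m := by omega
    simp [add_assoc, hd]
    ring_nf
  · simp
  · obtain ⟨d, rfl⟩ := Nat.exists_eq_add_of_lt h
    have hd : d < m := by omega
    simp [add_assoc, hd]

section

variable {n m : ℕ}

lemma Delta_mul_mul_conjTranspose_apply
    (X : Matrix (Fin (m + 1) × Fin n) (Fin (m + 1) × Fin n) ℂ) (θ : ℝ) (a b : Fin n) :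
    (Delta n m θ * X * (Delta n m θ)ᴴ) a b
      = ∑ j : Fin (m + 1), ∑ j' : Fin (m + 1),
          cexp (I * ((j : ℂ) - j') * θ) * X (j, a) (j', b) := by
  simp only [mul_apply, Delta, conjTranspose_apply, of_apply, Fintype.sum_prod_type,
    apply_ite star, star_zero, mul_ite, ite_mul, mul_one, mul_zero, zero_mul, Finset.sum_mul,
    Finset.sum_ite_eq, Finset.mem_univ, if_true]
  rw [Finset.sum_comm]
  refine Finset.sum_congr rfl fun j _ => Finset.sum_congr rfl fun j' _ => ?_
  rw [mul_sub, sub_mul, sub_eq_add_neg, Complex.exp_add, Complex.star_def, ← Complex.exp_conj]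
  simp only [map_mul, conj_I, conj_ofReal, map_natCast, neg_mul]
  ring

variable {Y : Matrix (Fin (m + 1) × Fin n) (Fin (m + 1) × Fin n) ℝ}

lemma Dop_apply_eq_sum_ite (k : Fin (m + 1)) (a b : Fin n) :
    Dop n m Y k a b = ∑ j : Fin (m + 1), ∑ j' : Fin (m + 1),
      if (j' : ℕ) = j + k then Y (j, a) (j', b) else 0 := by
  simp only [Dop, Matrix.sum_apply, Fin.sum_ite_val_eq]
  refine Finset.sum_congr rfl fun j _ => ?_
  split_ifs <;> rfl

lemma Dop_transpose_apply (hY : Y.IsSymm) (k : Fin (m + 1)) (a b : Fin n) :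
    (Dop n m Y k)ᵀ a b = ∑ j : Fin (m + 1), ∑ j' : Fin (m + 1),
      if (j : ℕ) = j' + k then Y (j, a) (j', b) else 0 := by
  rw [transpose_apply, Dop_apply_eq_sum_ite, Finset.sum_comm]
  simp only [hY.apply]

lemma Dop_zero_isSymm (hY : Y.IsSymm) : (Dop n m Y 0).IsSymm := by
  ext a b
  rw [Dop_transpose_apply hY, Dop_apply_eq_sum_ite]
  simp only [Fin.val_zero, add_zero, eq_comm]

lemma Delta_mul_mul_conjTranspose_eq_psiOf (hY : Y.IsSymm) (θ : ℝ) :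
    Delta n m θ * Y.map ofReal * (Delta n m θ)ᴴ = psiOf n m (Dop n m Y) θ := by
  ext a b
  rw [Delta_mul_mul_conjTranspose_apply]
  simp only [cexp_I_mul_sub_eq_sum_ite (Fin.is_le _) (Fin.is_le _), add_mul, ite_mul, one_mul,
    zero_mul, Finset.sum_mul, Finset.sum_add_distrib]
  simp only [psiOf, Matrix.add_apply, Matrix.sum_apply, Matrix.smul_apply, map_apply, smul_eq_mul,
    Dop_transpose_apply hY]
  simp only [Dop_apply_eq_sum_ite, ofReal_sum, apply_ite ofReal, ofReal_zero, Finset.mul_sum,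
    mul_ite, mul_zero, Fin.val_succ, Fin.val_zero, add_zero, Finset.sum_add_distrib]
  congr 1
  · simp only [Fin.val_inj, Finset.sum_ite_eq, Finset.sum_ite_eq', Finset.mem_univ, if_true]
  · congr 1 <;> exact (Finset.sum_congr rfl fun _ _ => Finset.sum_comm).trans Finset.sum_comm

end

theorem delta_conj_eq_pseudoPolynomial_general
    (n m : ℕ)
    (Y : Matrix (Fin (m + 1) × Fin n) (Fin (m + 1) × Fin n) ℝ) (hY : Y.IsSymm) :
    (∀ θ : ℝ,
      Delta n m θ * Y.map Complex.ofReal * (Delta n m θ)ᴴ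
        = (Dop n m Y 0).map Complex.ofReal +
            ∑ k : Fin m,
              (Complex.exp (-(Complex.I * ((k.1 : ℂ) + 1) * (θ : ℂ))) •
                  (Dop n m Y k.succ).map Complex.ofReal +
                Complex.exp (Complex.I * ((k.1 : ℂ) + 1) * (θ : ℂ)) •
                  ((Dop n m Y k.succ)ᵀ).map Complex.ofReal)) ∧
    memQ n m (fun θ => Delta n m θ * Y.map Complex.ofReal * (Delta n m θ)ᴴ) := by
  have hΨ := Delta_mul_mul_conjTranspose_eq_psiOf hY
  exact ⟨hΨ, Dop n m Y, Dop_zero_isSymm hY, hΨ⟩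

/-- For a real symmetric block matrix `Y`,
`Δ(θ) Y Δ(θ)ᴴ = D₀(Y) + ∑_{k=1}^m (e^{-ikθ} • D_k(Y) + e^{ikθ} • D_k(Y)ᵀ)` for all `θ`;
in particular `θ ↦ Δ(θ) Y Δ(θ)ᴴ` belongs to `Q(n,m)`. -/
theorem delta_conj_eq_pseudoPolynomial
    (n m : ℕ) (hn : 0 < n) (hm : 0 < m)
    (Y : Matrix (Fin (m + 1) × Fin n) (Fin (m + 1) × Fin n) ℝ) (hY : Y.IsSymm) :
    (∀ θ : ℝ,
      Delta n m θ * Y.map Complex.ofReal * (Delta n m θ)ᴴ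
        = (Dop n m Y 0).map Complex.ofReal +
            ∑ k : Fin m,
              (Complex.exp (-(Complex.I * ((k.1 : ℂ) + 1) * (θ : ℂ))) •
                  (Dop n m Y k.succ).map Complex.ofReal +
                Complex.exp (Complex.I * ((k.1 : ℂ) + 1) * (θ : ℂ)) •
                  ((Dop n m Y k.succ)ᵀ).map Complex.ofReal)) ∧
    memQ n m (fun θ => Delta n m θ * Y.map Complex.ofReal * (Delta n m θ)ᴴ) :=
  delta_conj_eq_pseudoPolynomial_general n m Y hY
end

section
/- For every real n(m+1) × n(m+1) matrix Y, (1/(2π)) ∫_{-π}^{π} Matrix.trace(Δ(θ) Y Δ(θ)ᴴ) dθ = Matrix.trace(Y), where the equality is between complex numbers (the real trace coerced to ℂ). -/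
open Matrix Complex Real
open scoped ComplexOrder

/-- `(1/2π) ∫_{-π}^{π} tr(Δ(θ) Y Δ(θ)ᴴ) dθ = tr(Y)` for every real
block matrix `Y` (equality of complex numbers, the real trace coerced to `ℂ`). -/
theorem trace_integral_delta_conj_eq_trace
    (n m : ℕ) (hn : 0 < n) (hm : 0 < m)
    (Y : Matrix (Fin (m + 1) × Fin n) (Fin (m + 1) × Fin n) ℝ) :
    ((1 / (2 * Real.pi) : ℝ) : ℂ) *
        ∫ θ in (-Real.pi)..Real.pi,
          Matrix.trace (Delta n m θ * Y.map Complex.ofReal * (Delta n m θ)ᴴ)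
      = ((Matrix.trace Y : ℝ) : ℂ) := by
  set c : Fin (m+1) → Fin (m+1) → ℂ := fun j k => ∑ a : Fin n, (Y (j,a) (k,a) : ℂ) with hc
  have key : ∀ θ : ℝ,
      Matrix.trace (Delta n m θ * Y.map Complex.ofReal * (Delta n m θ)ᴴ)
        = ∑ j : Fin (m+1), ∑ k : Fin (m+1),
            c j k * Complex.exp (Complex.I * ((j.1:ℂ) - (k.1:ℂ)) * θ) := by
    intro θ
    have hconj : ∀ k : ℕ, star (Complex.exp (Complex.I * (k:ℂ) * θ))
        = Complex.exp (-(Complex.I * (k:ℂ) * θ)) := by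
      intro k
      rw [Complex.star_def, ← Complex.exp_conj]
      congr 1
      simp [Complex.conj_I]
    simp only [hc, Matrix.trace, Matrix.diag, Matrix.mul_apply, Matrix.conjTranspose_apply,
      Delta, Matrix.of_apply, Matrix.map_apply, Fintype.sum_prod_type, _root_.map_mul,
      mul_ite, ite_mul, mul_zero, zero_mul, mul_one, one_mul, star_mul',
      apply_ite (star : ℂ → ℂ), star_zero, star_one, Finset.sum_ite_eq,
      Finset.sum_ite_eq', Finset.mem_univ, if_true, Finset.mul_sum, Finset.sum_mul,
      hconj, ← Complex.exp_add]
    rw [Finset.sum_comm]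
    conv_lhs => rw [show (fun (k : Fin (m+1)) => ∑ a : Fin n, ∑ j : Fin (m+1), Complex.exp (Complex.I * (j.1:ℂ) * θ) * (Y (j,a) (k,a) : ℂ) * Complex.exp (-(Complex.I * (k.1:ℂ) * θ))) = fun k => ∑ j : Fin (m+1), ∑ a : Fin n, Complex.exp (Complex.I * (j.1:ℂ) * θ) * (Y (j,a) (k,a) : ℂ) * Complex.exp (-(Complex.I * (k.1:ℂ) * θ)) from funext fun k => Finset.sum_comm]
    rw [Finset.sum_comm]
    refine Finset.sum_congr rfl fun j _ => Finset.sum_congr rfl fun k _ =>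
      Finset.sum_congr rfl fun a _ => ?_
    rw [show Complex.I * ((j.1:ℂ) - (k.1:ℂ)) * θ
        = Complex.I * (j.1:ℂ) * θ + -(Complex.I * (k.1:ℂ) * θ) by ring, Complex.exp_add]
    ring
  rw [intervalIntegral.integral_congr (g := fun θ => ∑ j : Fin (m+1), ∑ k : Fin (m+1),
      c j k * Complex.exp (Complex.I * ((j.1:ℂ) - (k.1:ℂ)) * θ)) (fun θ _ => key θ)]
  have hint : ∀ (z d : ℂ), IntervalIntegrable
      (fun θ : ℝ => z * Complex.exp (Complex.I * d * θ)) MeasureTheory.volume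
      (-Real.pi) Real.pi := by
    intro z d
    exact (Continuous.mul continuous_const (Complex.continuous_exp.comp
      (by continuity))).intervalIntegrable _ _
  have hint2 : ∀ j : Fin (m+1), IntervalIntegrable
      (fun θ : ℝ => ∑ k : Fin (m+1), c j k * Complex.exp (Complex.I * ((j.1:ℂ) - (k.1:ℂ)) * θ))
      MeasureTheory.volume (-Real.pi) Real.pi := by
    intro j
    apply Continuous.intervalIntegrable
    exact continuous_finset_sum _ fun k _ => Continuous.mul continuous_const
      (Complex.continuous_exp.comp (by continuity))
  rw [intervalIntegral.integral_finset_sum (fun j _ => hint2 j)]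
  have hswap : ∀ j : Fin (m+1),
      (∫ θ in (-Real.pi)..Real.pi, ∑ k : Fin (m+1),
        c j k * Complex.exp (Complex.I * ((j.1:ℂ) - (k.1:ℂ)) * θ))
      = ∑ k : Fin (m+1), ∫ θ in (-Real.pi)..Real.pi,
        c j k * Complex.exp (Complex.I * ((j.1:ℂ) - (k.1:ℂ)) * θ) :=
    fun j => intervalIntegral.integral_finset_sum (fun k _ => hint _ _)
  simp only [hswap]
  have eval : ∀ j k : Fin (m+1),
      (∫ θ in (-Real.pi)..Real.pi,
        c j k * Complex.exp (Complex.I * ((j.1:ℂ) - (k.1:ℂ)) * θ))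
      = if j = k then c j k * (2 * Real.pi) else 0 := by
    intro j k
    rw [intervalIntegral.integral_const_mul]
    by_cases h : j = k
    · subst h
      rw [if_pos rfl]
      have h0 : Complex.I * ((j.1:ℂ) - (j.1:ℂ)) = 0 := by ring
      simp only [h0, zero_mul, Complex.exp_zero]
      rw [intervalIntegral.integral_const]
      rw [Complex.real_smul]
      push_cast
      ring
    · rw [if_neg h]
      have hd : ((j.1:ℂ) - (k.1:ℂ)) ≠ 0 := by
        intro h0
        apply h
        have : (j.1 : ℂ) = (k.1 : ℂ) := by linear_combination h0
        exact Fin.ext (by exact_mod_cast this)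
      have hcne : Complex.I * ((j.1:ℂ) - (k.1:ℂ)) ≠ 0 := mul_ne_zero Complex.I_ne_zero hd
      rw [integral_exp_mul_complex hcne]
      have hz : ∃ z : ℤ, ((j.1:ℂ) - (k.1:ℂ)) = (z : ℂ) := ⟨(j.1 : ℤ) - k.1, by push_cast; ring⟩
      obtain ⟨z, hz⟩ := hz
      have : Complex.exp (Complex.I * ((j.1:ℂ) - (k.1:ℂ)) * (Real.pi : ℂ))
          = Complex.exp (Complex.I * ((j.1:ℂ) - (k.1:ℂ)) * ((-Real.pi : ℝ) : ℂ)) := by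
        rw [show Complex.I * ((j.1:ℂ) - (k.1:ℂ)) * (Real.pi : ℂ)
            = Complex.I * ((j.1:ℂ) - (k.1:ℂ)) * ((-Real.pi : ℝ) : ℂ)
              + (z : ℂ) * (2 * Real.pi * Complex.I) by
          push_cast; rw [← hz]; ring, Complex.exp_add,
          Complex.exp_int_mul_two_pi_mul_I, mul_one]
      rw [this, sub_self, zero_div, mul_zero]
  simp only [eval, Finset.sum_ite_eq', Finset.mem_univ, if_true]
  have htr : ((Matrix.trace Y : ℝ) : ℂ) = ∑ j : Fin (m+1), c j j := by
    simp only [hc, Matrix.trace, Matrix.diag, Fintype.sum_prod_type]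
    push_cast
    rfl
  simp only [Finset.sum_ite_eq, Finset.mem_univ, if_true]
  rw [htr, ← Finset.sum_mul]
  have hπ : (Real.pi : ℂ) ≠ 0 := Complex.ofReal_ne_zero.mpr Real.pi_ne_zero
  push_cast
  field_simp
end

section
/- For every Ψ ∈ Q(n,m) there exists a real symmetric n(m+1) × n(m+1) matrix Y such that Ψ(θ) = Δ(θ) Y Δ(θ)ᴴ for every θ ∈ ℝ. That is, the map Y ↦ (θ ↦ Δ(θ) Y Δ(θ)ᴴ) from real symmetric n(m+1) × n(m+1) matrices onto Q(n,m) is surjective. -/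
open Matrix Complex Real
open scoped ComplexOrder

/-- Every `Ψ ∈ Q(n,m)` can be represented as
`Ψ(θ) = Δ(θ) Y Δ(θ)ᴴ` for some real symmetric block matrix `Y`; i.e. the map
`Y ↦ (θ ↦ Δ(θ) Y Δ(θ)ᴴ)` from symmetric matrices onto `Q(n,m)` is surjective. -/
theorem exists_symm_representation_of_memQ
    (n m : ℕ) (hn : 0 < n) (hm : 0 < m)
    (Ψ : ℝ → Matrix (Fin n) (Fin n) ℂ) (hΨ : memQ n m Ψ) :
    ∃ Y : Matrix (Fin (m + 1) × Fin n) (Fin (m + 1) × Fin n) ℝ,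
      Y.IsSymm ∧ ∀ θ : ℝ, Ψ θ = Delta n m θ * Y.map Complex.ofReal * (Delta n m θ)ᴴ := by
  obtain ⟨Q, hsymm, hQ⟩ := hΨ
  set Y : Matrix (Fin (m + 1) × Fin n) (Fin (m + 1) × Fin n) ℝ :=
    Matrix.of fun p q =>
      if p.1 = 0 then (if q.1 = 0 then Q 0 p.2 q.2 else Q q.1 p.2 q.2)
      else (if q.1 = 0 then Q p.1 q.2 p.2 else 0) with hYdef
  refine ⟨Y, ?_, ?_⟩
  · ext p q
    simp only [Matrix.transpose_apply, hYdef, Matrix.of_apply]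
    by_cases h1 : p.1 = 0 <;> by_cases h2 : q.1 = 0 <;> simp [h1, h2]
    conv_lhs => rw [← hsymm]
    rfl
  · intro θ
    rw [hQ θ]
    ext a b
    have hR : (Delta n m θ * Y.map Complex.ofReal * (Delta n m θ)ᴴ) a b
        = ∑ j : Fin (m+1), ∑ k : Fin (m+1),
            Complex.exp (Complex.I * (j.1:ℂ) * θ) * Complex.exp (-(Complex.I * (k.1:ℂ) * θ)) *
              (Y (j,a) (k,b) : ℂ) := by
      simp only [Matrix.mul_apply, Matrix.conjTranspose_apply, Delta, Matrix.of_apply,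
        Matrix.map_apply, Fintype.sum_prod_type, mul_ite, mul_one, mul_zero, ite_mul, zero_mul,
        Finset.sum_ite_eq, Finset.mem_univ, if_true, _root_.map_mul, ← Complex.exp_conj,
        Complex.conj_I, Complex.conj_ofReal, Finset.sum_ite_eq', Complex.star_def,
        apply_ite (starRingEnd ℂ), map_zero, map_natCast, Finset.sum_mul, neg_mul]
      rw [Finset.sum_comm]
      exact Finset.sum_congr rfl fun j _ => Finset.sum_congr rfl fun k _ => by ring
    rw [hR]
    rw [Fin.sum_univ_succ]
    simp only [Fin.sum_univ_succ (n := m)]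
    simp only [hYdef, Matrix.of_apply, Fin.val_zero, Fin.succ_ne_zero, if_false, if_true,
      Nat.cast_zero, mul_zero, zero_mul, Complex.exp_zero, one_mul, Fin.val_succ,
      Nat.cast_add, Nat.cast_one, Complex.ofReal_zero, Finset.sum_const_zero, add_zero]
    simp only [psiOf, Matrix.add_apply, Matrix.sum_apply, Matrix.smul_apply, Matrix.map_apply,
      Matrix.transpose_apply, smul_eq_mul]
    rw [Finset.sum_add_distrib]
    rw [neg_zero, Complex.exp_zero, one_mul]
    simp only [mul_one]
    rw [add_assoc]
end

section
/- Let Z be a real symmetric n(m+1) × n(m+1) matrix partitioned into n×n blocks Z_{jk}. Then Δ(θ) Z Δ(θ)ᴴ is a diagonal matrix for every θ ∈ ℝ if and only if D_k(Z) is a diagonal matrix for every k = 0, 1, …, m. -/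
open Matrix Complex Real
open scoped ComplexOrder

noncomputable def auxP (n m : ℕ)
    (Z : Matrix (Fin (m+1) × Fin n) (Fin (m+1) × Fin n) ℝ) (a b : Fin n) : Polynomial ℂ :=
  ∑ j : Fin (m+1), ∑ k : Fin (m+1),
    Polynomial.C ((Z (j,a) (k,b) : ℝ) : ℂ) * Polynomial.X ^ (j.1 + m - k.1)

lemma entry_sum (n m : ℕ) (Z : Matrix (Fin (m+1) × Fin n) (Fin (m+1) × Fin n) ℝ)
    (θ : ℝ) (a b : Fin n) :
    (Delta n m θ * Z.map Complex.ofReal * (Delta n m θ)ᴴ) a b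
      = ∑ j : Fin (m+1), ∑ k : Fin (m+1),
          Complex.exp (Complex.I * (j.1:ℂ) * θ) * ((Z (j,a) (k,b) : ℝ) : ℂ)
            * Complex.exp (-(Complex.I * (k.1:ℂ) * θ)) := by
  simp only [Matrix.mul_apply, Matrix.conjTranspose_apply, Delta, Matrix.of_apply,
    Matrix.map_apply, Fintype.sum_prod_type, mul_ite, mul_one, mul_zero, ite_mul, zero_mul,
    Finset.sum_ite_eq, Finset.mem_univ, if_true, apply_ite (star : ℂ → ℂ), star_zero,
    ← Complex.exp_conj, _root_.map_mul, Complex.conj_I, Complex.conj_ofReal]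
  rw [Finset.sum_comm]
  apply Finset.sum_congr rfl; intro j _
  rw [Finset.sum_mul]
  apply Finset.sum_congr rfl; intro k _
  congr 1
  rw [show (star (cexp (Complex.I * (j.1:ℂ) * θ)) : ℂ) = (starRingEnd ℂ) (cexp (Complex.I * (j.1:ℂ) * θ)) from rfl,
    ← Complex.exp_conj]
  congr 1
  simp [Complex.conj_I]

lemma entry_eq (n m : ℕ) (Z : Matrix (Fin (m+1) × Fin n) (Fin (m+1) × Fin n) ℝ)
    (θ : ℝ) (a b : Fin n) :
    (Delta n m θ * Z.map Complex.ofReal * (Delta n m θ)ᴴ) a b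
      = Complex.exp (-(Complex.I * (m:ℂ) * θ)) *
        (auxP n m Z a b).eval (Complex.exp (Complex.I * θ)) := by
  rw [entry_sum, auxP]
  simp only [Polynomial.eval_finset_sum, Polynomial.eval_mul, Polynomial.eval_C,
    Polynomial.eval_pow, Polynomial.eval_X, Finset.mul_sum]
  apply Finset.sum_congr rfl; intro j _
  apply Finset.sum_congr rfl; intro k _
  rw [← Complex.exp_nat_mul]
  have hk : (k.1 : ℕ) ≤ j.1 + m := le_trans (Nat.le_of_lt_succ k.2) (Nat.le_add_left _ _)
  have hc : ((j.1 + m - k.1 : ℕ) : ℂ) = (j.1 : ℂ) + m - k.1 := by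
    push_cast [Nat.cast_sub hk]; ring
  rw [hc, mul_right_comm, ← Complex.exp_add, mul_left_comm, ← Complex.exp_add, mul_comm]
  congr 2
  ring

lemma auxP_coeff (n m : ℕ) (Z : Matrix (Fin (m+1) × Fin n) (Fin (m+1) × Fin n) ℝ)
    (a b : Fin n) (t : ℕ) :
    (auxP n m Z a b).coeff t
      = ∑ j : Fin (m+1), ∑ k : Fin (m+1),
          if j.1 + m - k.1 = t then ((Z (j,a) (k,b) : ℝ) : ℂ) else 0 := by
  rw [auxP]
  simp only [Polynomial.finset_sum_coeff, Polynomial.coeff_C_mul, Polynomial.coeff_X_pow,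
    mul_ite, mul_one, mul_zero]
  apply Finset.sum_congr rfl; intro j _
  apply Finset.sum_congr rfl; intro k _
  congr 1
  simp [eq_comm]

lemma dop_cast (n m : ℕ) (Z : Matrix (Fin (m+1) × Fin n) (Fin (m+1) × Fin n) ℝ)
    (k : Fin (m+1)) (a b : Fin n) :
    ((Dop n m Z k a b : ℝ) : ℂ)
      = ∑ j : Fin (m+1), if h : j.1 + k.1 ≤ m
          then ((Z (j, a) (⟨j.1 + k.1, Nat.lt_succ_of_le h⟩, b) : ℝ) : ℂ) else 0 := by
  rw [Dop]
  rw [Matrix.sum_apply]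
  push_cast
  apply Finset.sum_congr rfl; intro j _
  split <;> simp

lemma coeff_low (n m : ℕ) (Z : Matrix (Fin (m+1) × Fin n) (Fin (m+1) × Fin n) ℝ)
    (a b : Fin n) (d : ℕ) (hd : d ≤ m) :
    (auxP n m Z a b).coeff (m - d)
      = ((Dop n m Z ⟨d, Nat.lt_succ_of_le hd⟩ a b : ℝ) : ℂ) := by
  rw [auxP_coeff, dop_cast]
  apply Finset.sum_congr rfl; intro j _
  by_cases h : j.1 + d ≤ m
  · rw [dif_pos h]
    rw [Finset.sum_eq_single (⟨j.1 + d, Nat.lt_succ_of_le h⟩ : Fin (m+1))]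
    · rw [if_pos (by simp; omega)]
    · intro k _ hk
      rw [if_neg]
      intro he
      exact hk (by ext; simp; omega)
    · simp
  · rw [dif_neg h]
    apply Finset.sum_eq_zero
    intro k _
    rw [if_neg]
    have := Nat.le_of_lt_succ k.2
    omega

lemma coeff_high (n m : ℕ) (Z : Matrix (Fin (m+1) × Fin n) (Fin (m+1) × Fin n) ℝ)
    (hZ : Z.IsSymm) (a b : Fin n) (d : ℕ) (hd : d ≤ m) :
    (auxP n m Z a b).coeff (m + d)
      = ((Dop n m Z ⟨d, Nat.lt_succ_of_le hd⟩ b a : ℝ) : ℂ) := by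
  rw [auxP_coeff, dop_cast, Finset.sum_comm]
  apply Finset.sum_congr rfl; intro k _
  by_cases h : k.1 + d ≤ m
  · rw [dif_pos h]
    rw [Finset.sum_eq_single (⟨k.1 + d, Nat.lt_succ_of_le h⟩ : Fin (m+1))]
    · rw [if_pos (by simp; omega)]
      congr 1
      have := hZ
      rw [Matrix.IsSymm] at this
      calc Z (⟨k.1 + d, Nat.lt_succ_of_le h⟩, a) (k, b)
          = Zᵀ (k, b) (⟨k.1 + d, Nat.lt_succ_of_le h⟩, a) := rfl
        _ = Z (k, b) (⟨k.1 + d, Nat.lt_succ_of_le h⟩, a) := by rw [this]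
    · intro j _ hj
      rw [if_neg]
      intro he
      have := Nat.le_of_lt_succ j.2
      exact hj (by ext; simp; omega)
    · simp
  · rw [dif_neg h]
    apply Finset.sum_eq_zero
    intro j _
    rw [if_neg]
    have := Nat.le_of_lt_succ j.2
    omega

lemma coeff_big (n m : ℕ) (Z : Matrix (Fin (m+1) × Fin n) (Fin (m+1) × Fin n) ℝ)
    (a b : Fin n) (t : ℕ) (ht : 2 * m < t) :
    (auxP n m Z a b).coeff t = 0 := by
  rw [auxP_coeff]
  apply Finset.sum_eq_zero; intro j _
  apply Finset.sum_eq_zero; intro k _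
  rw [if_neg]
  have := Nat.le_of_lt_succ j.2
  omega
lemma expI_injOn : Set.InjOn (fun θ : ℝ => Complex.exp (Complex.I * θ)) (Set.Ioo 0 1) := by
  intro x hx y hy hxy
  simp only at hxy
  rw [Complex.exp_eq_exp_iff_exists_int] at hxy
  obtain ⟨t, ht⟩ := hxy
  have him : x = y + t * (2 * Real.pi) := by
    have := congrArg Complex.im ht
    simpa [Complex.mul_im, Complex.add_im] using this
  have hpi := Real.pi_gt_three
  have habs : |(t : ℝ)| * (2 * Real.pi) < 1 * (2 * Real.pi) := by
    have h1 : |x - y| < 1 := by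
      rw [abs_sub_lt_iff]
      constructor <;> [linarith [hx.1, hx.2, hy.1, hy.2]; linarith [hx.1, hx.2, hy.1, hy.2]]
    have h2 : x - y = t * (2 * Real.pi) := by linarith
    have h3 : |x - y| = |(t : ℝ)| * (2 * Real.pi) := by
      rw [h2, abs_mul]
      congr 1
      exact abs_of_pos (by positivity)
    nlinarith
  have ht1 : |(t : ℝ)| < 1 := lt_of_mul_lt_mul_right (by simpa using habs) (by positivity)
  have ht0 : t = 0 := by
    rw [← Int.cast_abs] at ht1
    have h4 : |t| < 1 := by exact_mod_cast ht1
    have := abs_lt.mp h4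
    omega
  rw [ht0] at him
  simpa using him

/-- For a real symmetric block matrix `Z`, the pseudo-polynomial
`θ ↦ Δ(θ) Z Δ(θ)ᴴ` is diagonal-valued iff `D_k(Z)` is diagonal for every `k = 0, …, m`. -/
theorem delta_conj_isDiag_iff
    (n m : ℕ) (hn : 0 < n) (hm : 0 < m)
    (Z : Matrix (Fin (m + 1) × Fin n) (Fin (m + 1) × Fin n) ℝ) (hZ : Z.IsSymm) :
    (∀ θ : ℝ, (Delta n m θ * Z.map Complex.ofReal * (Delta n m θ)ᴴ).IsDiag) ↔
      ∀ k : Fin (m + 1), (Dop n m Z k).IsDiag := by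
  constructor
  · intro h k a b hab
    have hp : auxP n m Z a b = 0 := by
      apply Polynomial.eq_zero_of_infinite_isRoot
      apply Set.Infinite.mono (s := (fun θ : ℝ => Complex.exp (Complex.I * θ)) '' Set.Ioo 0 1)
      · rintro x ⟨θ, _, rfl⟩
        have h0 : (Delta n m θ * Z.map Complex.ofReal * (Delta n m θ)ᴴ) a b = 0 := h θ hab
        rw [entry_eq] at h0
        show (auxP n m Z a b).eval _ = 0
        exact (mul_eq_zero.mp h0).resolve_left (Complex.exp_ne_zero _)
      · exact (Set.Ioo_infinite (by norm_num : (0:ℝ) < 1)).image expI_injOn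
    have := coeff_low n m Z a b k.1 (Nat.le_of_lt_succ k.2)
    rw [hp] at this
    simp only [Polynomial.coeff_zero] at this
    have h0 : (Dop n m Z ⟨k.1, k.2⟩ a b : ℝ) = 0 := by exact_mod_cast this.symm
    simpa using h0
  · intro h θ a b hab
    have hp : auxP n m Z a b = 0 := by
      ext t
      simp only [Polynomial.coeff_zero]
      rcases le_or_gt t m with ht | ht
      · have hd : m - (m - t) = t := by omega
        rw [← hd, coeff_low n m Z a b (m - t) (by omega)]
        have := h ⟨m - t, by omega⟩ hab
        rw [this]
        simp
      · rcases le_or_gt t (2 * m) with ht2 | ht2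
        · have hd : m + (t - m) = t := by omega
          rw [← hd, coeff_high n m Z hZ a b (t - m) (by omega)]
          have := h ⟨t - m, by omega⟩ (Ne.symm hab)
          rw [this]
          simp
        · exact coeff_big n m Z a b t ht2
    rw [entry_eq, hp]
    simp
end
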